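/- arXiv:1609.06381 — 4 statements merged into one kernel-verified Lean document; each statement's English description precedes it below -/
import Mathlib

section
/- Let n ≥ 1, let W be an n×n real doubly stochastic matrix (all entries nonnegative, every row sum and every column sum equal to 1) such that every entry of W^n is strictly positive. Let x : ℕ → ℝ^n evolve according to x(k+1) = W(x(k) + θ(k)), where θ : ℕ → ℝ^n is a noise sequence. If there exist α > 0 and ρ ∈ [0,1) such that ‖θ(k)‖_∞ ≤ α ρ^k for all k, and the total noise is zero in the sense that lim_{K→∞} ∑_{k=0}^{K} ∑_{i=1}^{n} θ_i(k) = 0, then for every i, lim_{k→∞} x_i(k) = x̄, where x̄ = (1/n) ∑_{i=1}^n x_i(0). -/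
/-!
The spread `max y - min y` of the state drives the argument. A row-stochastic matrix never
increases it, and one with all entries at least `δ`, such as `W ^ n`, shrinks it by the factor
`1 - 2δ`; so the spread of `W ^ m *ᵥ x k` decays geometrically in `m`, while `x (k + m)` differs
from it by at most the noise tail `∑_{i ≥ k} ‖θ i‖`. Hence the spread of `x k` tends to zero.
Column-stochasticity conserves the sum of the entries up to the accumulated total noise, which
tends to zero, so every entry converges to the initial average.
-/

open Filter Finset Matrix Topology

section Spread

variable {ι : Type*} [Fintype ι]

theorem sum_mul_le_sub_mul_sub {w y : ι → ℝ} {b : ℝ} (hw : ∀ j, 0 ≤ w j)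
    (hw_sum : ∑ j, w j = 1) (hy : ∀ j, y j ≤ b) (j₀ : ι) :
    ∑ j, w j * y j ≤ b - w j₀ * (b - y j₀) := by
  have hgap : b - ∑ j, w j * y j = ∑ j, w j * (b - y j) := by
    simp only [mul_sub, sum_sub_distrib, ← sum_mul, hw_sum, one_mul]
  have hterm : w j₀ * (b - y j₀) ≤ ∑ j, w j * (b - y j) :=
    single_le_sum (f := fun j => w j * (b - y j))
      (fun j _ => mul_nonneg (hw j) (sub_nonneg.2 (hy j))) (mem_univ j₀)
  linarith

theorem norm_mulVec_le_of_mem_rowStochastic {P : Matrix ι ι ℝ} [DecidableEq ι]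
    (hP : P ∈ rowStochastic ℝ ι) (v : ι → ℝ) : ‖P *ᵥ v‖ ≤ ‖v‖ := by
  refine (pi_norm_le_iff_of_nonneg (norm_nonneg v)).2 fun i => ?_
  rw [Real.norm_eq_abs, mulVec, dotProduct]
  calc |∑ j, P i j * v j| ≤ ∑ j, |P i j * v j| := abs_sum_le_sum_abs _ _
    _ ≤ ∑ j, P i j * ‖v‖ := sum_le_sum fun j _ => by
        rw [abs_mul, abs_of_nonneg (hP.1 i j), ← Real.norm_eq_abs]
        exact mul_le_mul_of_nonneg_left (norm_le_pi_norm v j) (hP.1 i j)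
    _ = ‖v‖ := by rw [← sum_mul, sum_row_of_mem_rowStochastic hP, one_mul]

variable [Nonempty ι]

noncomputable def spread (y : ι → ℝ) : ℝ :=
  univ.sup' univ_nonempty y - univ.inf' univ_nonempty y

theorem spread_le_iff {y : ι → ℝ} {c : ℝ} : spread y ≤ c ↔ ∀ i j, y i - y j ≤ c := by
  rw [spread, sub_le_iff_le_add, sup'_le_iff]
  refine forall_congr' fun i => ?_
  simp only [← sub_le_iff_le_add', le_inf'_iff, mem_univ, forall_const, sub_le_comm]

theorem sub_le_spread (y : ι → ℝ) (i j : ι) : y i - y j ≤ spread y :=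
  spread_le_iff.1 le_rfl i j

theorem spread_nonneg (y : ι → ℝ) : 0 ≤ spread y := by
  simpa using sub_le_spread y (Classical.arbitrary ι) (Classical.arbitrary ι)

theorem spread_le_spread_add_norm_sub (y z : ι → ℝ) : spread y ≤ spread z + 2 * ‖y - z‖ :=
  spread_le_iff.2 fun i j => by
    have hi := abs_le.1 (norm_le_pi_norm (y - z) i)
    have hj := abs_le.1 (norm_le_pi_norm (y - z) j)
    have := sub_le_spread z i j
    simp only [Pi.sub_apply] at hi hj
    linarith

theorem abs_sub_average_le_spread (y : ι → ℝ) (i : ι) :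
    |y i - (∑ j, y j) / Fintype.card ι| ≤ spread y := by
  have hcard : (0 : ℝ) < Fintype.card ι := by exact_mod_cast Fintype.card_pos
  have hdev : y i - (∑ j, y j) / Fintype.card ι = (∑ j, (y i - y j)) / Fintype.card ι := by
    rw [sum_sub_distrib, sum_const, card_univ, nsmul_eq_mul]
    field_simp
  rw [hdev, abs_div, abs_of_pos hcard, div_le_iff₀ hcard]
  calc |∑ j, (y i - y j)| ≤ ∑ j, |y i - y j| := abs_sum_le_sum_abs _ _
    _ ≤ ∑ _j : ι, spread y :=
        sum_le_sum fun j _ => abs_sub_le_iff.2 ⟨sub_le_spread y i j, sub_le_spread y j i⟩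
    _ = spread y * Fintype.card ι := by simp [mul_comm]

theorem tendsto_apply_of_tendsto_spread {y : ℕ → ι → ℝ} {s : ℝ}
    (hspread : Tendsto (fun k => spread (y k)) atTop (𝓝 0))
    (hsum : Tendsto (fun k => ∑ i, y k i) atTop (𝓝 s)) (i : ι) :
    Tendsto (fun k => y k i) atTop (𝓝 (s / Fintype.card ι)) :=
  (hsum.div_const _).congr_dist <| squeeze_zero (fun _ => dist_nonneg)
    (fun k => by rw [Real.dist_eq, abs_sub_comm]; exact abs_sub_average_le_spread (y k) i)
    hspread

variable [DecidableEq ι] {P : Matrix ι ι ℝ}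

theorem spread_mulVec_le (hP : P ∈ rowStochastic ℝ ι) {δ : ℝ} (hδ : ∀ i j, δ ≤ P i j)
    (y : ι → ℝ) : spread (P *ᵥ y) ≤ (1 - 2 * δ) * spread y := by
  obtain ⟨jmax, -, hmax⟩ := exists_mem_eq_sup' univ_nonempty y
  obtain ⟨jmin, -, hmin⟩ := exists_mem_eq_inf' univ_nonempty y
  have hspread : spread y = y jmax - y jmin := by rw [spread, hmax, hmin]
  have le_max : ∀ j, y j ≤ y jmax := fun j => hmax ▸ le_sup' y (mem_univ j)
  have min_le : ∀ j, y jmin ≤ y j := fun j => hmin ▸ inf'_le y (mem_univ j)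
  refine spread_le_iff.2 fun i i' => ?_
  have upper := sum_mul_le_sub_mul_sub (hP.1 i) (sum_row_of_mem_rowStochastic hP i) le_max jmin
  have lower := sum_mul_le_sub_mul_sub (y := -y) (hP.1 i') (sum_row_of_mem_rowStochastic hP i')
    (fun j => neg_le_neg (min_le j)) jmax
  simp only [Pi.neg_apply, mul_neg, sum_neg_distrib] at lower
  have hi : δ * spread y ≤ P i jmin * spread y :=
    mul_le_mul_of_nonneg_right (hδ i jmin) (spread_nonneg y)
  have hi' : δ * spread y ≤ P i' jmax * spread y :=
    mul_le_mul_of_nonneg_right (hδ i' jmax) (spread_nonneg y)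
  simp only [mulVec, dotProduct]
  rw [hspread] at hi hi' ⊢
  linarith

theorem spread_mulVec_le_spread (hP : P ∈ rowStochastic ℝ ι) (y : ι → ℝ) :
    spread (P *ᵥ y) ≤ spread y := by
  simpa using spread_mulVec_le hP (δ := 0) hP.1 y

theorem spread_pow_mulVec_le (hP : P ∈ rowStochastic ℝ ι) {N : ℕ} {c : ℝ} (hc : 0 ≤ c)
    (hcontract : ∀ y, spread (P ^ N *ᵥ y) ≤ c * spread y) (m : ℕ) (y : ι → ℝ) :
    spread (P ^ m *ᵥ y) ≤ c ^ (m / N) * spread y := by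
  have hblocks : ∀ t z, spread ((P ^ N) ^ t *ᵥ z) ≤ c ^ t * spread z := by
    intro t
    induction t with
    | zero => simp
    | succ t ih =>
      intro z
      rw [pow_succ', ← mulVec_mulVec, pow_succ', mul_assoc]
      exact (hcontract _).trans (mul_le_mul_of_nonneg_left (ih z) hc)
  calc spread (P ^ m *ᵥ y) = spread ((P ^ N) ^ (m / N) *ᵥ (P ^ (m % N) *ᵥ y)) := by
        rw [mulVec_mulVec, ← pow_mul, ← pow_add, Nat.div_add_mod]
    _ ≤ c ^ (m / N) * spread (P ^ (m % N) *ᵥ y) := hblocks _ _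
    _ ≤ c ^ (m / N) * spread y :=
        mul_le_mul_of_nonneg_left (spread_mulVec_le_spread (pow_mem hP _) y) (pow_nonneg hc _)

end Spread

section Consensus

variable {ι : Type*} [Fintype ι] [DecidableEq ι] {P : Matrix ι ι ℝ} {x θ : ℕ → ι → ℝ}

theorem norm_sub_pow_mulVec_le (hP : P ∈ rowStochastic ℝ ι)
    (hx : ∀ k, x (k + 1) = P *ᵥ (x k + θ k)) (k m : ℕ) :
    ‖x (k + m) - P ^ m *ᵥ x k‖ ≤ ∑ i ∈ range m, ‖θ (i + k)‖ := by
  induction m with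
  | zero => simp
  | succ m ih =>
    have hstep : x (k + (m + 1)) - P ^ (m + 1) *ᵥ x k
        = P *ᵥ ((x (k + m) - P ^ m *ᵥ x k) + θ (k + m)) := by
      rw [← add_assoc, hx, pow_succ', ← mulVec_mulVec, ← mulVec_sub]
      congr 1
      abel
    rw [hstep, sum_range_succ, add_comm m k]
    exact (norm_mulVec_le_of_mem_rowStochastic hP _).trans
      ((norm_add_le _ _).trans (by linarith))

theorem sum_apply_eq_add_sum_noise (hP : P ∈ colStochastic ℝ ι)
    (hx : ∀ k, x (k + 1) = P *ᵥ (x k + θ k)) (K : ℕ) :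
    ∑ i, x K i = ∑ i, x 0 i + ∑ k ∈ range K, ∑ i, θ k i := by
  induction K with
  | zero => simp
  | succ K ih =>
    rw [hx, sum_mulVec_of_mem_colStochastic hP, Pi.add_def, sum_add_distrib, ih,
      sum_range_succ, add_assoc]

theorem tendsto_zero_of_le_add {u f g : ℕ → ℝ} (hu : ∀ k, 0 ≤ u k)
    (hf : Tendsto f atTop (𝓝 0)) (hg : Tendsto g atTop (𝓝 0))
    (hle : ∀ k m, u (k + m) ≤ f m + g k) : Tendsto u atTop (𝓝 0) := by
  refine tendsto_order.2 ⟨fun a ha => Eventually.of_forall fun k => ha.trans_le (hu k),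
    fun a ha => ?_⟩
  obtain ⟨M, hM⟩ := eventually_atTop.1 (hf.eventually (gt_mem_nhds (half_pos ha)))
  obtain ⟨K, hK⟩ := eventually_atTop.1 (hg.eventually (gt_mem_nhds (half_pos ha)))
  refine eventually_atTop.2 ⟨K + M, fun j hj => ?_⟩
  obtain ⟨m, rfl⟩ := Nat.exists_eq_add_of_le (le_of_add_le_left hj)
  have := hle K m
  have := hM m (by omega)
  have := hK K le_rfl
  linarith

variable [Nonempty ι]

theorem tendsto_spread_zero (hP : P ∈ rowStochastic ℝ ι) {N : ℕ} (hN : 0 < N)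
    (hPN : ∀ i j, 0 < (P ^ N) i j) (hθ : Summable fun k => ‖θ k‖)
    (hx : ∀ k, x (k + 1) = P *ᵥ (x k + θ k)) :
    Tendsto (fun k => spread (x k)) atTop (𝓝 0) := by
  obtain ⟨p, hp⟩ := Finite.exists_min fun p : ι × ι => (P ^ N) p.1 p.2
  set δ := min ((P ^ N) p.1 p.2) (1 / 2)
  have hδ : 0 < δ := lt_min (hPN _ _) one_half_pos
  set c := 1 - 2 * δ
  have hc0 : 0 ≤ c := by linarith [min_le_right ((P ^ N) p.1 p.2) (1 / 2)]
  have hc1 : c < 1 := by linarith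
  have hcontract : ∀ m y, spread (P ^ m *ᵥ y) ≤ c ^ (m / N) * spread y :=
    spread_pow_mulVec_le hP hc0 <| spread_mulVec_le (pow_mem hP N) fun i j =>
      (min_le_left _ _).trans (hp (i, j))
  set T := fun k => ∑' i, ‖θ (i + k)‖
  have hstep : ∀ k m, spread (x (k + m)) ≤ c ^ (m / N) * spread (x k) + 2 * T k := by
    intro k m
    calc spread (x (k + m)) ≤ spread (P ^ m *ᵥ x k) + 2 * ‖x (k + m) - P ^ m *ᵥ x k‖ :=
          spread_le_spread_add_norm_sub _ _
      _ ≤ c ^ (m / N) * spread (x k) + 2 * T k := by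
          gcongr
          · exact hcontract m _
          · exact (norm_sub_pow_mulVec_le hP hx k m).trans <|
              ((summable_nat_add_iff k).2 hθ).sum_le_tsum _ fun i _ => norm_nonneg _
  have hbound : ∀ k, spread (x k) ≤ spread (x 0) + 2 * T 0 := fun k => by
    simpa using (hstep 0 k).trans <| add_le_add_left
      (mul_le_of_le_one_left (spread_nonneg _) (pow_le_one₀ hc0 hc1.le)) _
  refine tendsto_zero_of_le_add (f := fun m => c ^ (m / N) * (spread (x 0) + 2 * T 0))
    (fun k => spread_nonneg _) ?_ (by simpa using (tendsto_sum_nat_add fun i => ‖θ i‖).const_mul 2)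
    fun k m => (hstep k m).trans <|
      add_le_add_left (mul_le_mul_of_nonneg_left (hbound k) (pow_nonneg hc0 _)) _
  simpa using ((tendsto_pow_atTop_nhds_zero_of_lt_one hc0 hc1).comp
    (Nat.tendsto_div_const_atTop hN.ne')).mul_const (spread (x 0) + 2 * T 0)

end Consensus

theorem scda_sufficient_condition_general
    (n : ℕ) (W : Matrix (Fin n) (Fin n) ℝ)
    (hW_nonneg : ∀ i j, 0 ≤ W i j)
    (hW_row : ∀ i, ∑ j, W i j = 1)
    (hW_col : ∀ j, ∑ i, W i j = 1)
    (hWn_pos : ∀ i j, 0 < (W ^ n) i j)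
    (x θ : ℕ → Fin n → ℝ)
    (hdyn : ∀ k, x (k + 1) = W.mulVec (x k + θ k))
    (α ρ : ℝ) (hρ0 : 0 ≤ ρ) (hρ1 : ρ < 1)
    (hθ : ∀ k, ‖θ k‖ ≤ α * ρ ^ k)
    (hzero : Tendsto (fun K => ∑ k ∈ Finset.range (K + 1), ∑ i, θ k i)
      atTop (nhds 0)) :
    ∀ i, Tendsto (fun k => x k i) atTop (nhds ((∑ i, x 0 i) / n)) := by
  intro i
  have : Nonempty (Fin n) := ⟨i⟩
  have hrow : W ∈ rowStochastic ℝ (Fin n) := mem_rowStochastic_iff_sum.2 ⟨hW_nonneg, hW_row⟩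
  have hcol : W ∈ colStochastic ℝ (Fin n) := mem_colStochastic_iff_sum.2 ⟨hW_nonneg, hW_col⟩
  have hsummable : Summable fun k => ‖θ k‖ :=
    .of_nonneg_of_le (fun _ => norm_nonneg _) hθ
      ((summable_geometric_of_lt_one hρ0 hρ1).mul_left α)
  have hsum : Tendsto (fun k => ∑ j, x k j) atTop (𝓝 (∑ j, x 0 j)) := by
    have hnoise : Tendsto (fun K => ∑ k ∈ range K, ∑ i, θ k i) atTop (𝓝 0) :=
      (tendsto_add_atTop_iff_nat 1).1 hzero
    have h := hnoise.const_add (∑ j, x 0 j)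
    rw [add_zero] at h
    exact h.congr fun K => (sum_apply_eq_add_sum_noise hcol hdyn K).symm
  have h := tendsto_apply_of_tendsto_spread
    (tendsto_spread_zero hrow i.pos hWn_pos hsummable hdyn) hsum i
  rwa [Fintype.card_fin] at h

/-- If the added noise is exponentially decaying and has zero total sum, then the
noisy consensus iteration `x(k+1) = W(x(k) + θ(k))` with a doubly stochastic matrix `W`
whose `n`-th power is entrywise positive converges to the exact average of the
initial states. -/
theorem scda_sufficient_condition
    (n : ℕ) (hn : 1 ≤ n) (W : Matrix (Fin n) (Fin n) ℝ)
    (hW_nonneg : ∀ i j, 0 ≤ W i j)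
    (hW_row : ∀ i, ∑ j, W i j = 1)
    (hW_col : ∀ j, ∑ i, W i j = 1)
    (hWn_pos : ∀ i j, 0 < (W ^ n) i j)
    (x θ : ℕ → Fin n → ℝ)
    (hdyn : ∀ k, x (k + 1) = W.mulVec (x k + θ k))
    (α ρ : ℝ) (hα : 0 < α) (hρ0 : 0 ≤ ρ) (hρ1 : ρ < 1)
    (hθ : ∀ k, ‖θ k‖ ≤ α * ρ ^ k)
    (hzero : Tendsto (fun K => ∑ k ∈ Finset.range (K + 1), ∑ i, θ k i)
      atTop (nhds 0)) :
    ∀ i, Tendsto (fun k => x k i) atTop (nhds ((∑ i, x 0 i) / n)) :=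
  scda_sufficient_condition_general n W hW_nonneg hW_row hW_col hWn_pos x θ hdyn α ρ hρ0 hρ1 hθ
    hzero
end

section
/- Let n ≥ 1, let W be an n×n real doubly stochastic matrix, and let x : ℕ → ℝ^n evolve according to x(k+1) = W(x(k) + θ(k)) for a noise sequence θ : ℕ → ℝ^n. If for every i, lim_{k→∞} x_i(k) = x̄ where x̄ = (1/n) ∑_{i=1}^n x_i(0), then necessarily lim_{K→∞} ∑_{k=0}^{K-1} ∑_{i=1}^{n} θ_i(k) = 0; that is, the zero-sum condition on the noise is necessary for exact average consensus. -/
open Filter Finset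

/-- The zero-sum condition on the noise is necessary for exact average consensus:
if the noisy consensus iteration with a doubly stochastic matrix converges to the
average of the initial states, then the accumulated noise tends to zero. -/
theorem scda_necessary_condition
    (n : ℕ) (hn : 1 ≤ n) (W : Matrix (Fin n) (Fin n) ℝ)
    (hW_nonneg : ∀ i j, 0 ≤ W i j)
    (hW_row : ∀ i, ∑ j, W i j = 1)
    (hW_col : ∀ j, ∑ i, W i j = 1)
    (x θ : ℕ → Fin n → ℝ)
    (hdyn : ∀ k, x (k + 1) = W.mulVec (x k + θ k))
    (hconv : ∀ i, Tendsto (fun k => x k i) atTop (nhds ((∑ i, x 0 i) / n))) :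
    Tendsto (fun K => ∑ k ∈ Finset.range K, ∑ i, θ k i) atTop (nhds 0) := by
  have hmv : ∀ v : Fin n → ℝ, ∑ i, W.mulVec v i = ∑ i, v i := by
    intro v
    simp only [Matrix.mulVec, dotProduct]
    rw [Finset.sum_comm]
    refine Finset.sum_congr rfl fun j _ => ?_
    rw [← Finset.sum_mul, hW_col j, one_mul]
  have key : ∀ K, ∑ i, x K i = ∑ i, x 0 i + ∑ k ∈ Finset.range K, ∑ i, θ k i := by
    intro K
    induction K with
    | zero => simp
    | succ K ih =>
      rw [hdyn K, hmv, Finset.sum_range_succ]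
      simp only [Pi.add_apply, Finset.sum_add_distrib, ih]
      ring
  have hsum : Tendsto (fun K => ∑ i, x K i) atTop (nhds (∑ i, x 0 i)) := by
    have := tendsto_finset_sum (Finset.univ : Finset (Fin n))
      (fun i _ => hconv i)
    convert this using 2
    rw [Finset.sum_const, nsmul_eq_mul]
    field_simp
    simp
  have : Tendsto (fun K => ∑ i, x K i - ∑ i, x 0 i) atTop
      (nhds (∑ i, x 0 i - ∑ i, x 0 i)) := hsum.sub tendsto_const_nhds
  simp only [sub_self] at this
  convert this using 2 with K
  rw [key K]; ring
end

section
/- Let n ≥ 1, let W be an n×n real doubly stochastic matrix such that every entry of W^n is strictly positive, and let x : ℕ → ℝ^n evolve according to x(k+1) = W(x(k) + θ(k)). Fix h ≥ 1 and suppose there exist α > 0 and ρ ∈ [0,1) such that for every ℓ ∈ {0,1,...,h−1} and every k ∈ ℕ, ‖θ(ℓ + k h)‖_∞ ≤ α ρ^k, and suppose the zero-sum condition lim_{K→∞} ∑_{ℓ=0}^{K} ∑_{i=1}^{n} θ_i(ℓ) = 0 holds. Then for every i, lim_{k→∞} x_i(k) = x̄ = (1/n) ∑_{i=1}^n x_i(0).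 -/
open Filter Finset Matrix Topology

/-! The oscillation `max x - min x` of a vector is never increased by a row-stochastic matrix,
and `W ^ n` multiplies it by at most `1 - n δ < 1`, where `δ > 0` is the least entry of `W ^ n`.
The interleaved geometric bounds force `θ(k) → 0`, so the oscillation of `x(k)` tends to zero.
Column stochasticity makes `∑ᵢ xᵢ(k) - ∑ᵢ xᵢ(0)` the accumulated noise, which the zero-sum
condition sends to zero; hence every coordinate converges to the initial average. -/

section Oscillation

variable {ι : Type*} [Fintype ι] [Nonempty ι]

noncomputable def osc (y : ι → ℝ) : ℝ :=
  univ.sup' univ_nonempty y - univ.inf' univ_nonempty y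

lemma inf'_le_apply (y : ι → ℝ) (i : ι) : univ.inf' univ_nonempty y ≤ y i :=
  inf'_le y (mem_univ i)

lemma apply_le_sup' (y : ι → ℝ) (i : ι) : y i ≤ univ.sup' univ_nonempty y :=
  le_sup' y (mem_univ i)

lemma osc_nonneg (y : ι → ℝ) : 0 ≤ osc y := by
  obtain ⟨i⟩ := ‹Nonempty ι›
  unfold osc
  linarith [inf'_le_apply y i, apply_le_sup' y i]

lemma osc_add_le (y z : ι → ℝ) : osc (y + z) ≤ osc y + osc z := by
  have hsup : univ.sup' univ_nonempty (y + z) ≤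
      univ.sup' univ_nonempty y + univ.sup' univ_nonempty z :=
    sup'_le _ _ fun i _ => add_le_add (apply_le_sup' y i) (apply_le_sup' z i)
  have hinf : univ.inf' univ_nonempty y + univ.inf' univ_nonempty z ≤
      univ.inf' univ_nonempty (y + z) :=
    le_inf' _ _ fun i _ => add_le_add (inf'_le_apply y i) (inf'_le_apply z i)
  unfold osc
  linarith

lemma osc_le_two_mul_norm (y : ι → ℝ) : osc y ≤ 2 * ‖y‖ := by
  have hsup : univ.sup' univ_nonempty y ≤ ‖y‖ :=
    sup'_le _ _ fun i _ => (le_abs_self _).trans (norm_le_pi_norm y i)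
  have hinf : -‖y‖ ≤ univ.inf' univ_nonempty y :=
    le_inf' _ _ fun i _ => neg_le.1 ((neg_le_abs _).trans (norm_le_pi_norm y i))
  unfold osc
  linarith

lemma abs_sub_average_le_osc (y : ι → ℝ) (i : ι) :
    |y i - (∑ j, y j) / Fintype.card ι| ≤ osc y := by
  have hcard : (0 : ℝ) < Fintype.card ι := by exact_mod_cast Fintype.card_pos
  have hinf : univ.inf' univ_nonempty y ≤ (∑ j, y j) / Fintype.card ι := by
    rw [le_div_iff₀ hcard, mul_comm, ← nsmul_eq_mul]
    exact card_nsmul_le_sum _ _ _ fun j _ => inf'_le_apply y j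
  have hsup : (∑ j, y j) / Fintype.card ι ≤ univ.sup' univ_nonempty y := by
    rw [div_le_iff₀ hcard, mul_comm, ← nsmul_eq_mul]
    exact sum_le_card_nsmul _ _ _ fun j _ => apply_le_sup' y j
  rw [abs_le]
  unfold osc
  constructor <;> linarith [inf'_le_apply y i, apply_le_sup' y i]

lemma tendsto_apply_of_tendsto_osc {y : ℕ → ι → ℝ} {s : ℝ}
    (hosc : Tendsto (fun k => osc (y k)) atTop (𝓝 0))
    (hsum : Tendsto (fun k => ∑ j, y k j) atTop (𝓝 s)) (i : ι) :
    Tendsto (fun k => y k i) atTop (𝓝 (s / Fintype.card ι)) := by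
  have hdev : Tendsto (fun k => y k i - (∑ j, y k j) / Fintype.card ι) atTop (𝓝 0) :=
    squeeze_zero_norm (fun k => abs_sub_average_le_osc (y k) i) hosc
  simpa using hdev.add (hsum.div_const (Fintype.card ι : ℝ))

/-- Dobrushin's contraction: any two rows of `P` overlap in mass at least `card ι * δ`. -/
lemma osc_mulVec_le_of_le_apply {P : Matrix ι ι ℝ} (hrow : ∀ i, ∑ j, P i j = 1) {δ : ℝ}
    (hδ : ∀ i j, δ ≤ P i j) (y : ι → ℝ) :
    osc (P *ᵥ y) ≤ (1 - Fintype.card ι * δ) * osc y := by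
  obtain ⟨i, -, hi⟩ := exists_mem_eq_sup' univ_nonempty (P *ᵥ y)
  obtain ⟨i', -, hi'⟩ := exists_mem_eq_inf' univ_nonempty (P *ᵥ y)
  set M := univ.sup' univ_nonempty y
  set m := univ.inf' univ_nonempty y
  set c : ι → ℝ := fun j => min (P i j) (P i' j)
  have hc : Fintype.card ι * δ ≤ ∑ j, c j := by
    rw [← nsmul_eq_mul]
    exact card_nsmul_le_sum _ _ _ fun j _ => le_min (hδ i j) (hδ i' j)
  have hupper : ∑ j, (P i j - c j) * y j ≤ (1 - ∑ j, c j) * M := by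
    rw [← hrow i, ← sum_sub_distrib, sum_mul]
    exact sum_le_sum fun j _ =>
      mul_le_mul_of_nonneg_left (apply_le_sup' y j) (sub_nonneg.2 (min_le_left _ _))
  have hlower : (1 - ∑ j, c j) * m ≤ ∑ j, (P i' j - c j) * y j := by
    rw [← hrow i', ← sum_sub_distrib, sum_mul]
    exact sum_le_sum fun j _ =>
      mul_le_mul_of_nonneg_left (inf'_le_apply y j) (sub_nonneg.2 (min_le_right _ _))
  have hsplit : osc (P *ᵥ y) = ∑ j, (P i j - c j) * y j - ∑ j, (P i' j - c j) * y j := by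
    rw [osc, hi, hi']
    simp only [mulVec, dotProduct, sub_mul, sum_sub_distrib]
    ring
  calc osc (P *ᵥ y) ≤ (1 - ∑ j, c j) * M - (1 - ∑ j, c j) * m := by linarith
    _ = (1 - ∑ j, c j) * osc y := by rw [osc]; ring
    _ ≤ (1 - Fintype.card ι * δ) * osc y :=
      mul_le_mul_of_nonneg_right (sub_le_sub_left hc 1) (osc_nonneg y)

lemma osc_mulVec_le [DecidableEq ι] {P : Matrix ι ι ℝ} (hP : P ∈ rowStochastic ℝ ι)
    (y : ι → ℝ) : osc (P *ᵥ y) ≤ osc y := by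
  simpa using osc_mulVec_le_of_le_apply (sum_row_of_mem_rowStochastic hP)
    (fun _ _ => nonneg_of_mem_rowStochastic hP) y

end Oscillation

lemma tendsto_zero_of_le_mul_add {a ε : ℕ → ℝ} {τ : ℝ} (hτ0 : 0 ≤ τ) (hτ1 : τ < 1)
    (ha : ∀ k, 0 ≤ a k) (hrec : ∀ k, a (k + 1) ≤ τ * a k + ε k)
    (hε : Tendsto ε atTop (𝓝 0)) : Tendsto a atTop (𝓝 0) := by
  refine tendsto_order.2 ⟨fun b hb => .of_forall fun k => hb.trans_le (ha k), fun e he => ?_⟩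
  obtain ⟨K, hK⟩ := eventually_atTop.1
    (hε.eventually (ge_mem_nhds (show (0 : ℝ) < (1 - τ) * (e / 2) by nlinarith)))
  -- once the forcing is below `(1 - τ) e / 2`, the excess over `e / 2` decays geometrically
  have hgeom : ∀ t, a (K + t) - e / 2 ≤ τ ^ t * (a K - e / 2) := by
    intro t
    induction t with
    | zero => simp
    | succ t ih =>
      calc a (K + (t + 1)) - e / 2 ≤ τ * (a (K + t) - e / 2) := by
            rw [← add_assoc]
            linarith [hrec (K + t), hK (K + t) (Nat.le_add_right K t)]
        _ ≤ τ * (τ ^ t * (a K - e / 2)) := mul_le_mul_of_nonneg_left ih hτ0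
        _ = τ ^ (t + 1) * (a K - e / 2) := by ring
  have hpow : Tendsto (fun t => τ ^ t * (a K - e / 2)) atTop (𝓝 0) := by
    simpa using (tendsto_pow_atTop_nhds_zero_of_lt_one hτ0 hτ1).mul_const (a K - e / 2)
  obtain ⟨T, hT⟩ := eventually_atTop.1 (hpow.eventually (gt_mem_nhds (half_pos he)))
  refine eventually_atTop.2 ⟨K + T, fun k hk => ?_⟩
  obtain ⟨t, rfl⟩ := Nat.exists_eq_add_of_le (le_of_add_le_left hk)
  linarith [hgeom t, hT t (by omega)]

lemma tendsto_zero_of_norm_le_geometric_interleaved {E : Type*} [SeminormedAddCommGroup E]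
    {θ : ℕ → E} {h : ℕ} (hh : 0 < h) {α ρ : ℝ} (hρ0 : 0 ≤ ρ) (hρ1 : ρ < 1)
    (hθ : ∀ ℓ < h, ∀ k : ℕ, ‖θ (ℓ + k * h)‖ ≤ α * ρ ^ k) : Tendsto θ atTop (𝓝 0) := by
  have hbound : ∀ m, ‖θ m‖ ≤ α * ρ ^ (m / h) := fun m => by
    simpa only [Nat.mod_add_div'] using hθ (m % h) (Nat.mod_lt m hh) (m / h)
  have hdiv : Tendsto (fun m => m / h) atTop atTop := Nat.tendsto_div_const_atTop hh.ne'
  refine squeeze_zero_norm hbound ?_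
  simpa using ((tendsto_pow_atTop_nhds_zero_of_lt_one hρ0 hρ1).comp hdiv).const_mul α

section NoisyIteration

variable {ι : Type*} [Fintype ι] [DecidableEq ι] {W : Matrix ι ι ℝ} {x θ : ℕ → ι → ℝ}

lemma sum_noisy_iterate (hW : W ∈ colStochastic ℝ ι) (hdyn : ∀ k, x (k + 1) = W *ᵥ (x k + θ k))
    (k : ℕ) : ∑ i, x k i = ∑ i, x 0 i + ∑ ℓ ∈ range k, ∑ i, θ ℓ i := by
  induction k with
  | zero => simp
  | succ k ih =>
    rw [hdyn, sum_mulVec_of_mem_colStochastic hW]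
    simp only [Pi.add_apply, sum_add_distrib, ih, sum_range_succ]
    ring

variable [Nonempty ι]

lemma osc_noisy_iterate_le (hW : W ∈ rowStochastic ℝ ι)
    (hdyn : ∀ k, x (k + 1) = W *ᵥ (x k + θ k)) (m t : ℕ) :
    osc (x (m + t)) ≤ osc ((W ^ t) *ᵥ x m) + ∑ j ∈ range t, osc (θ (m + j)) := by
  suffices hdev : osc (x (m + t) - (W ^ t) *ᵥ x m) ≤ ∑ j ∈ range t, osc (θ (m + j)) by
    simpa using (osc_add_le ((W ^ t) *ᵥ x m) (x (m + t) - (W ^ t) *ᵥ x m)).trans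
      (add_le_add_right hdev _)
  induction t with
  | zero => simp [osc]
  | succ t ih =>
    have hstep : x (m + (t + 1)) - (W ^ (t + 1)) *ᵥ x m
        = W *ᵥ ((x (m + t) - (W ^ t) *ᵥ x m) + θ (m + t)) := by
      rw [← add_assoc, hdyn, pow_succ', ← mulVec_mulVec, ← mulVec_sub]
      congr 1
      abel
    rw [hstep, sum_range_succ]
    exact (osc_mulVec_le hW _).trans ((osc_add_le _ _).trans (add_le_add_left ih _))

end NoisyIteration

lemma card_mul_le_one_of_le_apply {ι : Type*} [Fintype ι] [Nonempty ι] {P : Matrix ι ι ℝ}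
    (hrow : ∀ i, ∑ j, P i j = 1) {δ : ℝ} (hδ : ∀ i j, δ ≤ P i j) :
    Fintype.card ι * δ ≤ 1 := by
  obtain ⟨i⟩ := ‹Nonempty ι›
  rw [← hrow i, ← nsmul_eq_mul]
  exact card_nsmul_le_sum _ _ _ fun j _ => hδ i j

lemma exists_pos_le_apply_of_pos {ι : Type*} [Finite ι] [Nonempty ι] {A : Matrix ι ι ℝ}
    (hA : ∀ i j, 0 < A i j) : ∃ δ > 0, ∀ i j, δ ≤ A i j := by
  obtain ⟨⟨i₀, j₀⟩, hmin⟩ := Finite.exists_min fun p : ι × ι => A p.1 p.2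
  exact ⟨A i₀ j₀, hA i₀ j₀, fun i j => hmin (i, j)⟩

section Consensus

variable {ι : Type*} [Fintype ι] [DecidableEq ι] [Nonempty ι] {W : Matrix ι ι ℝ}
  {x θ : ℕ → ι → ℝ}

theorem tendsto_osc_noisy_iterate (hW : W ∈ rowStochastic ℝ ι) {N : ℕ} (hN : 0 < N)
    (hWN : ∀ i j, 0 < (W ^ N) i j) (hdyn : ∀ k, x (k + 1) = W *ᵥ (x k + θ k))
    (hθ : Tendsto θ atTop (𝓝 0)) : Tendsto (fun k => osc (x k)) atTop (𝓝 0) := by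
  have hWrow : ∀ t i, ∑ j, (W ^ t) i j = 1 := fun t =>
    sum_row_of_mem_rowStochastic (pow_mem hW t)
  obtain ⟨δ, hδ, hδle⟩ := exists_pos_le_apply_of_pos hWN
  have hτ0 : 0 ≤ 1 - Fintype.card ι * δ :=
    sub_nonneg.2 (card_mul_le_one_of_le_apply (hWrow N) hδle)
  have hτ1 : 1 - Fintype.card ι * δ < 1 := by
    have : (0 : ℝ) < Fintype.card ι := by exact_mod_cast Fintype.card_pos
    nlinarith
  set ε : ℕ → ℝ := fun k => ∑ j ∈ range N, osc (θ (N * k + j))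
  have hoscθ : Tendsto (fun k => osc (θ k)) atTop (𝓝 0) :=
    squeeze_zero (fun _ => osc_nonneg _) (fun _ => osc_le_two_mul_norm _)
      (by simpa using hθ.norm.const_mul 2)
  have hε : Tendsto ε atTop (𝓝 0) := by
    simpa using tendsto_finsetSum (range N) fun j _ => hoscθ.comp <| tendsto_atTop_mono
      (fun k => (Nat.le_mul_of_pos_left k hN).trans (Nat.le_add_right _ j)) tendsto_id
  have hrec : ∀ k, osc (x (N * (k + 1))) ≤ (1 - Fintype.card ι * δ) * osc (x (N * k)) + ε k :=
    fun k => by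
      rw [mul_add_one]
      exact (osc_noisy_iterate_le hW hdyn _ N).trans
        (add_le_add_left (osc_mulVec_le_of_le_apply (hWrow N) hδle _) _)
  have ha := tendsto_zero_of_le_mul_add (a := fun k => osc (x (N * k))) hτ0 hτ1
    (fun _ => osc_nonneg _) hrec hε
  have hbound : ∀ m, osc (x m) ≤ osc (x (N * (m / N))) + ε (m / N) := fun m => by
    conv_lhs => rw [← Nat.div_add_mod m N]
    refine (osc_noisy_iterate_le hW hdyn _ _).trans
      (add_le_add (osc_mulVec_le (pow_mem hW _) _) ?_)
    exact sum_le_sum_of_subset_of_nonneg (range_subset_range.2 (Nat.mod_lt m hN).le)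
      fun _ _ _ => osc_nonneg _
  have hdiv := Nat.tendsto_div_const_atTop hN.ne'
  exact squeeze_zero (fun _ => osc_nonneg _) hbound
    (by simpa using (ha.comp hdiv).add (hε.comp hdiv))

end Consensus

theorem scda_subsequence_condition_general
    (n : ℕ) (hn : 1 ≤ n) (W : Matrix (Fin n) (Fin n) ℝ)
    (hW_nonneg : ∀ i j, 0 ≤ W i j)
    (hW_row : ∀ i, ∑ j, W i j = 1)
    (hW_col : ∀ j, ∑ i, W i j = 1)
    (hWn_pos : ∀ i j, 0 < (W ^ n) i j)
    (x θ : ℕ → Fin n → ℝ)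
    (hdyn : ∀ k, x (k + 1) = W.mulVec (x k + θ k))
    (h : ℕ) (hh : 1 ≤ h)
    (α ρ : ℝ) (hρ0 : 0 ≤ ρ) (hρ1 : ρ < 1)
    (hθ : ∀ ℓ < h, ∀ k : ℕ, ‖θ (ℓ + k * h)‖ ≤ α * ρ ^ k)
    (hzero : Tendsto (fun K => ∑ ℓ ∈ Finset.range (K + 1), ∑ i, θ ℓ i)
      atTop (nhds 0)) :
    ∀ i, Tendsto (fun k => x k i) atTop (nhds ((∑ i, x 0 i) / n)) := by
  intro i
  have : Nonempty (Fin n) := ⟨i⟩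
  have hosc := tendsto_osc_noisy_iterate (mem_rowStochastic_iff_sum.2 ⟨hW_nonneg, hW_row⟩) hn
    hWn_pos hdyn (tendsto_zero_of_norm_le_geometric_interleaved hh hρ0 hρ1 hθ)
  have hsum : Tendsto (fun k => ∑ j, x k j) atTop (𝓝 (∑ j, x 0 j)) := by
    rw [← tendsto_add_atTop_iff_nat 1]
    simpa using (hzero.const_add (∑ j, x 0 j)).congr fun K =>
      (sum_noisy_iterate (mem_colStochastic_iff_sum.2 ⟨hW_nonneg, hW_col⟩) hdyn (K + 1)).symm
  simpa using tendsto_apply_of_tendsto_osc hosc hsum i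

/-- If the noise process is split into `h` interleaved sub-sequences, each of which
decays exponentially in its own index, and the total noise is zero, then the noisy
consensus iteration converges to the exact average of the initial states. -/
theorem scda_subsequence_condition
    (n : ℕ) (hn : 1 ≤ n) (W : Matrix (Fin n) (Fin n) ℝ)
    (hW_nonneg : ∀ i j, 0 ≤ W i j)
    (hW_row : ∀ i, ∑ j, W i j = 1)
    (hW_col : ∀ j, ∑ i, W i j = 1)
    (hWn_pos : ∀ i j, 0 < (W ^ n) i j)
    (x θ : ℕ → Fin n → ℝ)
    (hdyn : ∀ k, x (k + 1) = W.mulVec (x k + θ k))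
    (h : ℕ) (hh : 1 ≤ h)
    (α ρ : ℝ) (hα : 0 < α) (hρ0 : 0 ≤ ρ) (hρ1 : ρ < 1)
    (hθ : ∀ ℓ < h, ∀ k : ℕ, ‖θ (ℓ + k * h)‖ ≤ α * ρ ^ k)
    (hzero : Tendsto (fun K => ∑ ℓ ∈ Finset.range (K + 1), ∑ i, θ ℓ i)
      atTop (nhds 0)) :
    ∀ i, Tendsto (fun k => x k i) atTop (nhds ((∑ i, x 0 i) / n)) :=
  scda_subsequence_condition_general n hn W hW_nonneg hW_row hW_col hWn_pos x θ hdyn h hh α ρ hρ0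
    hρ1 hθ hzero
end

section
/- Let n ≥ 1, let W be an n×n real doubly stochastic matrix such that every entry of W^n is strictly positive, and let α > 0 and ρ ∈ [0,1). For each node i let δ_i : ℕ → ℝ satisfy |δ_i(k)| ≤ (α/2) ρ^{k+1} for all k ≥ 0, and define the noise by θ_i(0) = δ_i(0) and θ_i(k) = δ_i(k) − δ_i(k−1) for k ≥ 1. Then the iteration x(k+1) = W(x(k) + θ(k)) satisfies lim_{k→∞} x_i(k) = x̄ for every i, where x̄ = (1/n) ∑_{i=1}^n x_i(0); that is, the SCDA algorithm achieves exact average consensus. -/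
open Filter Finset

namespace SCDAHelp

variable {n : ℕ}

lemma mulVec_le_sup (hne : (univ : Finset (Fin n)).Nonempty)
    (A : Matrix (Fin n) (Fin n) ℝ) (hA : ∀ i j, 0 ≤ A i j)
    (hrow : ∀ i, ∑ j, A i j = 1) (v : Fin n → ℝ) (i : Fin n) :
    A.mulVec v i ≤ univ.sup' hne v := by
  calc A.mulVec v i = ∑ j, A i j * v j := rfl
    _ ≤ ∑ j, A i j * univ.sup' hne v := by
        refine sum_le_sum fun j _ => ?_
        exact mul_le_mul_of_nonneg_left (le_sup' v (mem_univ j)) (hA i j)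
    _ = univ.sup' hne v := by rw [← sum_mul, hrow, one_mul]

lemma inf_le_mulVec (hne : (univ : Finset (Fin n)).Nonempty)
    (A : Matrix (Fin n) (Fin n) ℝ) (hA : ∀ i j, 0 ≤ A i j)
    (hrow : ∀ i, ∑ j, A i j = 1) (v : Fin n → ℝ) (i : Fin n) :
    univ.inf' hne v ≤ A.mulVec v i := by
  calc univ.inf' hne v = ∑ j, A i j * univ.inf' hne v := by rw [← sum_mul, hrow, one_mul]
    _ ≤ ∑ j, A i j * v j := by
        refine sum_le_sum fun j _ => ?_
        exact mul_le_mul_of_nonneg_left (inf'_le v (mem_univ j)) (hA i j)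
    _ = A.mulVec v i := rfl

lemma abs_mulVec_le
    (A : Matrix (Fin n) (Fin n) ℝ) (hA : ∀ i j, 0 ≤ A i j)
    (hrow : ∀ i, ∑ j, A i j = 1) (v : Fin n → ℝ) (b : ℝ)
    (hv : ∀ j, |v j| ≤ b) (i : Fin n) :
    |A.mulVec v i| ≤ b := by
  have : A.mulVec v i = ∑ j, A i j * v j := rfl
  rw [this]
  calc |∑ j, A i j * v j| ≤ ∑ j, |A i j * v j| := Finset.abs_sum_le_sum_abs _ _
    _ ≤ ∑ j, A i j * b := by
        refine sum_le_sum fun j _ => ?_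
        rw [abs_mul, abs_of_nonneg (hA i j)]
        exact mul_le_mul_of_nonneg_left (hv j) (hA i j)
    _ = b := by rw [← sum_mul, hrow, one_mul]

lemma contract_spread (hne : (univ : Finset (Fin n)).Nonempty)
    (A : Matrix (Fin n) (Fin n) ℝ) {β : ℝ} (hβ : 0 ≤ β)
    (hA : ∀ i j, β ≤ A i j)
    (hrow : ∀ i, ∑ j, A i j = 1) (v : Fin n → ℝ) :
    univ.sup' hne (A.mulVec v) - univ.inf' hne (A.mulVec v)
      ≤ (1 - 2 * β) * (univ.sup' hne v - univ.inf' hne v) := by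
  set S := univ.sup' hne v
  set I := univ.inf' hne v
  have hSI : I ≤ S := by
    obtain ⟨i0⟩ := hne
    exact le_trans (inf'_le v (mem_univ i0)) (le_sup' v (mem_univ i0))
  obtain ⟨l0, -, hl0⟩ := exists_mem_eq_inf' hne v
  obtain ⟨l1, -, hl1⟩ := exists_mem_eq_sup' hne v
  have key_up : ∀ i, A.mulVec v i ≤ S - β * (S - I) := by
    intro i
    have hsplit : A.mulVec v i = A i l0 * v l0 + ∑ j ∈ univ.erase l0, A i j * v j :=
      (Finset.add_sum_erase _ _ (mem_univ l0)).symm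
    have herase : ∑ j ∈ univ.erase l0, A i j = 1 - A i l0 := by
      have := Finset.add_sum_erase univ (fun j => A i j) (mem_univ l0)
      rw [hrow i] at this; linarith
    have h1 : ∑ j ∈ univ.erase l0, A i j * v j ≤ (1 - A i l0) * S := by
      rw [← herase, sum_mul]
      refine sum_le_sum fun j hj => ?_
      exact mul_le_mul_of_nonneg_left (le_sup' v (mem_univ j)) (le_trans hβ (hA i j))
    have hA0 : β ≤ A i l0 := hA i l0
    rw [hsplit, ← hl0]
    nlinarith [mul_le_mul_of_nonneg_right hA0 (sub_nonneg.2 hSI)]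
  have key_dn : ∀ i, I + β * (S - I) ≤ A.mulVec v i := by
    intro i
    have hsplit : A.mulVec v i = A i l1 * v l1 + ∑ j ∈ univ.erase l1, A i j * v j :=
      (Finset.add_sum_erase _ _ (mem_univ l1)).symm
    have herase : ∑ j ∈ univ.erase l1, A i j = 1 - A i l1 := by
      have := Finset.add_sum_erase univ (fun j => A i j) (mem_univ l1)
      rw [hrow i] at this; linarith
    have h1 : (1 - A i l1) * I ≤ ∑ j ∈ univ.erase l1, A i j * v j := by
      rw [← herase, sum_mul]
      refine sum_le_sum fun j hj => ?_
      exact mul_le_mul_of_nonneg_left (inf'_le v (mem_univ j)) (le_trans hβ (hA i j))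
    have hA1 : β ≤ A i l1 := hA i l1
    rw [hsplit, ← hl1]
    nlinarith [mul_le_mul_of_nonneg_right hA1 (sub_nonneg.2 hSI)]
  have hs : univ.sup' hne (A.mulVec v) ≤ S - β * (S - I) :=
    sup'_le _ _ fun i _ => key_up i
  have hi : I + β * (S - I) ≤ univ.inf' hne (A.mulVec v) :=
    le_inf' _ _ fun i _ => key_dn i
  linarith

lemma spread_add_le (hne : (univ : Finset (Fin n)).Nonempty)
    (u e : Fin n → ℝ) (b : ℝ) (he : ∀ i, |e i| ≤ b) :
    univ.sup' hne (u + e) - univ.inf' hne (u + e)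
      ≤ (univ.sup' hne u - univ.inf' hne u) + 2 * b := by
  have hs : univ.sup' hne (u + e) ≤ univ.sup' hne u + b := by
    refine sup'_le _ _ fun i _ => ?_
    show u i + e i ≤ univ.sup' hne u + b
    linarith [le_sup' u (mem_univ i), (abs_le.1 (he i)).2]
  have hi : univ.inf' hne u - b ≤ univ.inf' hne (u + e) := by
    refine le_inf' _ _ fun i _ => ?_
    show univ.inf' hne u - b ≤ u i + e i
    linarith [inf'_le u (mem_univ i), (abs_le.1 (he i)).1]
  linarith

lemma decay_rec (t : ℕ → ℝ) (c q C : ℝ) (ht : ∀ m, 0 ≤ t m)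
    (hc0 : 0 ≤ c) (hc1 : c < 1) (hq0 : 0 ≤ q) (hq1 : q < 1) (hC : 0 ≤ C)
    (hrec : ∀ m, t (m + 1) ≤ c * t m + C * q ^ m) :
    Tendsto t atTop (nhds 0) := by
  set d := max c q with hd
  have hd0 : 0 ≤ d := le_trans hc0 (le_max_left _ _)
  have hd1 : d < 1 := max_lt hc1 hq1
  have hcd : c ≤ d := le_max_left _ _
  have hqd : q ≤ d := le_max_right _ _
  have key : ∀ m, t (m + 1) ≤ c ^ (m + 1) * t 0 + C * (m + 1) * d ^ m := by
    intro m
    induction m with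
    | zero => simpa using hrec 0
    | succ m ih =>
      have h1 := hrec (m + 1)
      have h2 : c * t (m + 1) ≤ c * (c ^ (m + 1) * t 0 + C * (m + 1) * d ^ m) :=
        mul_le_mul_of_nonneg_left ih hc0
      have h3 : c * d ^ m ≤ d ^ (m + 1) := by
        rw [pow_succ']
        exact mul_le_mul_of_nonneg_right hcd (pow_nonneg hd0 m)
      have h4 : q ^ (m + 1) ≤ d ^ (m + 1) := pow_le_pow_left₀ hq0 hqd (m + 1)
      have h5 : (0:ℝ) ≤ C * (m + 1) := by positivity
      have h6 := mul_le_mul_of_nonneg_left h3 h5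
      have h7 := mul_le_mul_of_nonneg_left h4 hC
      push_cast
      calc t (m + 1 + 1) ≤ c * t (m + 1) + C * q ^ (m + 1) := h1
        _ ≤ c * (c ^ (m + 1) * t 0 + C * (m + 1) * d ^ m) + C * q ^ (m + 1) := by linarith
        _ = c ^ (m + 2) * t 0 + C * ((m:ℝ) + 1) * (c * d ^ m) + C * q ^ (m + 1) := by ring
        _ ≤ c ^ (m + 2) * t 0 + C * ((m:ℝ) + 1) * d ^ (m + 1) + C * d ^ (m + 1) := by linarith
        _ = c ^ (m + 1 + 1) * t 0 + C * ((m:ℝ) + 1 + 1) * d ^ (m + 1) := by ring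
  have hb : Tendsto (fun m : ℕ => c ^ (m + 1) * t 0 + C * (m + 1) * d ^ m) atTop (nhds 0) := by
    have h1 : Tendsto (fun m : ℕ => c ^ (m + 1) * t 0) atTop (nhds 0) := by
      have := (tendsto_pow_atTop_nhds_zero_of_lt_one hc0 hc1).mul_const (t 0)
      rw [zero_mul] at this
      exact this.comp (tendsto_add_atTop_nat 1)
    have h2 : Tendsto (fun m : ℕ => C * (m + 1) * d ^ m) atTop (nhds 0) := by
      have ha : Tendsto (fun m : ℕ => (m : ℝ) * d ^ m) atTop (nhds 0) :=
        tendsto_self_mul_const_pow_of_lt_one hd0 hd1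
      have hbp : Tendsto (fun m : ℕ => (d : ℝ) ^ m) atTop (nhds 0) :=
        tendsto_pow_atTop_nhds_zero_of_lt_one hd0 hd1
      have := ((ha.add hbp).const_mul C)
      simpa [mul_add, add_mul, mul_assoc, mul_comm, mul_left_comm] using this
    simpa using h1.add h2
  have hshift : Tendsto (fun m => t (m + 1)) atTop (nhds 0) :=
    squeeze_zero (fun m => ht (m + 1)) (fun m => key m) hb
  exact (tendsto_add_atTop_iff_nat 1).1 hshift

end SCDAHelp


/-- The SCDA algorithm achieves exact average consensus: with differenced noise
`θ_i(0) = δ_i(0)`, `θ_i(k) = δ_i(k) − δ_i(k−1)` built from auxiliary values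
`|δ_i(k)| ≤ (α/2)ρ^{k+1}`, the iteration `x(k+1) = W(x(k) + θ(k))` converges to
the average of the initial states. -/
theorem scda_convergence
    (n : ℕ) (hn : 1 ≤ n) (W : Matrix (Fin n) (Fin n) ℝ)
    (hW_nonneg : ∀ i j, 0 ≤ W i j)
    (hW_row : ∀ i, ∑ j, W i j = 1)
    (hW_col : ∀ j, ∑ i, W i j = 1)
    (hWn_pos : ∀ i j, 0 < (W ^ n) i j)
    (α ρ : ℝ) (hα : 0 < α) (hρ0 : 0 ≤ ρ) (hρ1 : ρ < 1)
    (δ : Fin n → ℕ → ℝ)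
    (hδ : ∀ i k, |δ i k| ≤ α / 2 * ρ ^ (k + 1))
    (θ : ℕ → Fin n → ℝ)
    (hθ0 : ∀ i, θ 0 i = δ i 0)
    (hθk : ∀ k, 1 ≤ k → ∀ i, θ k i = δ i k - δ i (k - 1))
    (x : ℕ → Fin n → ℝ)
    (hdyn : ∀ k, x (k + 1) = W.mulVec (x k + θ k)) :
    ∀ i, Tendsto (fun k => x k i) atTop (nhds ((∑ i, x 0 i) / n)) := by

  have hne : (univ : Finset (Fin n)).Nonempty := ⟨⟨0, hn⟩, mem_univ _⟩
  have hn0 : (0:ℝ) < n := by exact_mod_cast hn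
  -- facts about powers of W
  have hpow : ∀ j : ℕ, (∀ i l, 0 ≤ (W ^ j) i l) ∧ (∀ i, ∑ l, (W ^ j) i l = 1) := by
    intro j
    induction j with
    | zero =>
      constructor
      · intro i l
        by_cases h : i = l <;> simp [Matrix.one_apply, h]
      · intro i
        simp [Matrix.one_apply]
    | succ j ih =>
      constructor
      · intro i l
        rw [pow_succ, Matrix.mul_apply]
        exact sum_nonneg fun m _ => mul_nonneg (ih.1 i m) (hW_nonneg m l)
      · intro i
        simp only [pow_succ, Matrix.mul_apply]
        rw [Finset.sum_comm]
        calc ∑ m, ∑ l, (W ^ j) i m * W m l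
            = ∑ m, (W ^ j) i m * ∑ l, W m l := by
              exact Finset.sum_congr rfl fun m _ => (Finset.mul_sum _ _ _).symm
          _ = 1 := by simp [hW_row, ih.2]
  -- noise bound
  have hθb : ∀ k i, |θ k i| ≤ α * ρ ^ k := by
    intro k i
    cases k with
    | zero =>
      rw [hθ0 i]
      calc |δ i 0| ≤ α / 2 * ρ ^ 1 := hδ i 0
        _ ≤ α * ρ ^ 0 := by rw [pow_one, pow_zero]; nlinarith
    | succ k =>
      rw [hθk (k + 1) (by omega) i]
      have h1 := hδ i (k + 1)
      have h2 := hδ i k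
      have h3 : ρ ^ (k + 1 + 1) ≤ ρ ^ (k + 1) :=
        pow_le_pow_of_le_one hρ0 hρ1.le (by omega)
      have h4 : (k + 1 : ℕ) - 1 = k := by omega
      rw [h4]
      calc |δ i (k + 1) - δ i k| ≤ |δ i (k + 1)| + |δ i k| := abs_sub _ _
        _ ≤ α / 2 * ρ ^ (k + 1 + 1) + α / 2 * ρ ^ (k + 1) := by linarith
        _ ≤ α * ρ ^ (k + 1) := by nlinarith
  -- unrolled dynamics
  have hunroll : ∀ k j, x (k + j) =
      (W ^ j).mulVec (x k) + ∑ m ∈ range j, (W ^ (j - m)).mulVec (θ (k + m)) := by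
    intro k j
    induction j with
    | zero => simp [Matrix.one_mulVec]
    | succ j ih =>
      have hkj : k + (j + 1) = (k + j) + 1 := rfl
      rw [hkj, hdyn, ih]
      rw [Matrix.mulVec_add, Matrix.mulVec_add, Matrix.mulVec_mulVec]
      have hmsum : W.mulVec (∑ m ∈ range j, (W ^ (j - m)).mulVec (θ (k + m)))
          = ∑ m ∈ range j, (W ^ (j + 1 - m)).mulVec (θ (k + m)) := by
        have hms := map_sum (Matrix.mulVecLin W)
          (fun m => (W ^ (j - m)).mulVec (θ (k + m))) (range j)
        simp only [Matrix.mulVecLin_apply] at hms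
        rw [hms]
        refine Finset.sum_congr rfl fun m hm => ?_
        have hmj : m < j := mem_range.1 hm
        rw [Matrix.mulVec_mulVec, ← pow_succ', show j - m + 1 = j + 1 - m by omega]
      rw [hmsum, ← pow_succ', Finset.sum_range_succ,
        show j + 1 - j = 1 by omega, pow_one]
      abel
  -- the spread
  set s : ℕ → ℝ := fun k => univ.sup' hne (x k) - univ.inf' hne (x k) with hsdef
  have hs0 : ∀ k, 0 ≤ s k := by
    intro k
    obtain ⟨i0⟩ := hne
    have := le_trans (inf'_le (x k) (mem_univ i0)) (le_sup' (x k) (mem_univ i0))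
    simp only [hsdef]
    linarith
  -- one-step inequality
  have hstep : ∀ k, s (k + 1) ≤ s k + 2 * (α * ρ ^ k) := by
    intro k
    simp only [hsdef]
    rw [hdyn k]
    have h1 : univ.sup' hne (W.mulVec (x k + θ k)) ≤ univ.sup' hne (x k + θ k) :=
      sup'_le _ _ fun i _ => SCDAHelp.mulVec_le_sup hne W hW_nonneg hW_row _ i
    have h2 : univ.inf' hne (x k + θ k) ≤ univ.inf' hne (W.mulVec (x k + θ k)) :=
      le_inf' _ _ fun i _ => SCDAHelp.inf_le_mulVec hne W hW_nonneg hW_row _ i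
    have h3 := SCDAHelp.spread_add_le hne (x k) (θ k) (α * ρ ^ k) (fun i => hθb k i)
    linarith
  -- the contraction constant
  have hP : (univ : Finset (Fin n × Fin n)).Nonempty := ⟨(⟨0, hn⟩, ⟨0, hn⟩), mem_univ _⟩
  set ε := univ.inf' hP (fun p : Fin n × Fin n => (W ^ n) p.1 p.2) with hεdef
  have hεpos : 0 < ε := by
    obtain ⟨p, -, hp⟩ := exists_mem_eq_inf' hP (fun p : Fin n × Fin n => (W ^ n) p.1 p.2)
    rw [hεdef, hp]
    exact hWn_pos p.1 p.2
  have hεle : ∀ i j, ε ≤ (W ^ n) i j := fun i j =>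
    inf'_le (fun p : Fin n × Fin n => (W ^ n) p.1 p.2) (mem_univ (i, j))
  set β := min ε (1 / 2 : ℝ) with hβdef
  have hβpos : 0 < β := lt_min hεpos (by norm_num)
  have hβhalf : β ≤ 1 / 2 := min_le_right _ _
  have hβle : ∀ i j, β ≤ (W ^ n) i j := fun i j => le_trans (min_le_left _ _) (hεle i j)
  -- n-step contraction
  have hnstep : ∀ k, s (k + n) ≤ (1 - 2 * β) * s k + 2 * ((n : ℝ) * α * ρ ^ k) := by
    intro k
    have hub : ∀ i, |(∑ m ∈ range n, (W ^ (n - m)).mulVec (θ (k + m))) i|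
        ≤ (n : ℝ) * α * ρ ^ k := by
      intro i
      rw [Finset.sum_apply]
      calc |∑ m ∈ range n, (W ^ (n - m)).mulVec (θ (k + m)) i|
          ≤ ∑ m ∈ range n, |(W ^ (n - m)).mulVec (θ (k + m)) i| :=
            Finset.abs_sum_le_sum_abs _ _
        _ ≤ ∑ m ∈ range n, α * ρ ^ k := by
            refine sum_le_sum fun m _ => ?_
            have hb := SCDAHelp.abs_mulVec_le (W ^ (n - m)) (hpow (n - m)).1
              (hpow (n - m)).2 (θ (k + m)) (α * ρ ^ (k + m)) (fun j => hθb (k + m) j) i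
            refine hb.trans ?_
            have : ρ ^ (k + m) ≤ ρ ^ k := pow_le_pow_of_le_one hρ0 hρ1.le (by omega)
            nlinarith
        _ = (n : ℝ) * α * ρ ^ k := by simp [mul_assoc]
    have hspr := SCDAHelp.spread_add_le hne ((W ^ n).mulVec (x k))
      (∑ m ∈ range n, (W ^ (n - m)).mulVec (θ (k + m))) ((n : ℝ) * α * ρ ^ k) hub
    have hcon := SCDAHelp.contract_spread hne (W ^ n) hβpos.le hβle (hpow n).2 (x k)
    simp only [hsdef]
    rw [hunroll k n]
    linarith
  -- subsequence decay
  set t : ℕ → ℝ := fun m => s (n * m) with htdef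
  have hq1 : ρ ^ n < 1 := pow_lt_one₀ hρ0 hρ1 (by omega)
  have hq0 : 0 ≤ ρ ^ n := pow_nonneg hρ0 n
  have htt : Tendsto t atTop (nhds 0) := by
    refine SCDAHelp.decay_rec t (1 - 2 * β) (ρ ^ n) (2 * ((n : ℝ) * α))
      (fun m => hs0 _) (by linarith) (by linarith) hq0 hq1 (by positivity) ?_
    intro m
    have h := hnstep (n * m)
    have hmul : n * (m + 1) = n * m + n := by ring
    simp only [htdef, hmul]
    calc s (n * m + n) ≤ (1 - 2 * β) * s (n * m) + 2 * ((n : ℝ) * α * ρ ^ (n * m)) := h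
      _ = (1 - 2 * β) * s (n * m) + 2 * ((n : ℝ) * α) * (ρ ^ n) ^ m := by
          rw [pow_mul]; ring
  -- geometric sum bound
  have hgeo : ∀ r : ℕ, ∑ i ∈ range r, ρ ^ i ≤ (1 - ρ)⁻¹ := by
    intro r
    have h1ρ : 0 < 1 - ρ := by linarith
    refine le_of_mul_le_mul_right ?_ h1ρ
    have hm := geom_sum_mul ρ r
    have heq : (∑ i ∈ range r, ρ ^ i) * (1 - ρ) = 1 - ρ ^ r := by linear_combination -hm
    rw [heq, inv_mul_cancel₀ h1ρ.ne']
    have := pow_nonneg hρ0 r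
    linarith
  -- bridging from subsequence to full sequence
  have hbridge : ∀ m r, s (n * m + r) ≤ t m + 2 * α * (1 - ρ)⁻¹ * (ρ ^ n) ^ m := by
    intro m r
    have hpart : ∀ r, s (n * m + r) ≤ t m + 2 * α * ∑ i ∈ range r, ρ ^ (n * m + i) := by
      intro r
      induction r with
      | zero => simp [htdef]
      | succ r ih =>
        have h := hstep (n * m + r)
        rw [Finset.sum_range_succ]
        have : n * m + (r + 1) = (n * m + r) + 1 := by ring
        rw [this]
        have hrw : (2:ℝ) * (α * ρ ^ (n * m + r)) = 2 * α * ρ ^ (n * m + r) := by ring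
        calc s ((n * m + r) + 1) ≤ s (n * m + r) + 2 * (α * ρ ^ (n * m + r)) := h
          _ ≤ t m + 2 * α * ∑ i ∈ range r, ρ ^ (n * m + i) + 2 * α * ρ ^ (n * m + r) := by
              linarith
          _ = t m + 2 * α * (∑ i ∈ range r, ρ ^ (n * m + i) + ρ ^ (n * m + r)) := by ring
    refine (hpart r).trans ?_
    have hsum : ∑ i ∈ range r, ρ ^ (n * m + i) = ρ ^ (n * m) * ∑ i ∈ range r, ρ ^ i := by
      rw [Finset.mul_sum]
      exact Finset.sum_congr rfl fun i _ => by rw [← pow_add]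
    have hple : ∑ i ∈ range r, ρ ^ (n * m + i) ≤ ρ ^ (n * m) * (1 - ρ)⁻¹ := by
      rw [hsum]
      exact mul_le_mul_of_nonneg_left (hgeo r) (pow_nonneg hρ0 _)
    have hpm : ρ ^ (n * m) = (ρ ^ n) ^ m := pow_mul ρ n m
    have hαpos : (0:ℝ) ≤ 2 * α := by linarith
    calc t m + 2 * α * ∑ i ∈ range r, ρ ^ (n * m + i)
        ≤ t m + 2 * α * (ρ ^ (n * m) * (1 - ρ)⁻¹) := by
          have := mul_le_mul_of_nonneg_left hple hαpos
          linarith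
      _ = t m + 2 * α * (1 - ρ)⁻¹ * (ρ ^ n) ^ m := by rw [hpm]; ring
  -- spread tends to zero
  have hstend : Tendsto s atTop (nhds 0) := by
    have hdiv : Tendsto (fun k : ℕ => k / n) atTop atTop := by
      refine tendsto_atTop_atTop.2 fun b => ⟨n * b, fun k hk => ?_⟩
      rw [Nat.le_div_iff_mul_le (by omega : 0 < n)]
      calc b * n = n * b := Nat.mul_comm b n
        _ ≤ k := hk
    have h1 : Tendsto (fun k : ℕ => t (k / n)) atTop (nhds 0) := htt.comp hdiv
    have h2 : Tendsto (fun k : ℕ => 2 * α * (1 - ρ)⁻¹ * (ρ ^ n) ^ (k / n)) atTop (nhds 0) := by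
      have := ((tendsto_pow_atTop_nhds_zero_of_lt_one hq0 hq1).comp hdiv).const_mul
        (2 * α * (1 - ρ)⁻¹)
      simpa using this
    have hb : Tendsto (fun k : ℕ => t (k / n) + 2 * α * (1 - ρ)⁻¹ * (ρ ^ n) ^ (k / n))
        atTop (nhds 0) := by simpa using h1.add h2
    refine squeeze_zero hs0 (fun k => ?_) hb
    conv_lhs => rw [← Nat.div_add_mod k n]
    exact hbridge (k / n) (k % n)
  -- the average
  set a : ℕ → ℝ := fun k => ∑ i, x k i with hadef
  have hcolsum : ∀ y : Fin n → ℝ, ∑ i, W.mulVec y i = ∑ j, y j := by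
    intro y
    calc ∑ i, W.mulVec y i = ∑ i, ∑ j, W i j * y j := rfl
      _ = ∑ j, ∑ i, W i j * y j := Finset.sum_comm
      _ = ∑ j, y j := by
          refine sum_congr rfl fun j _ => ?_
          rw [← Finset.sum_mul, hW_col, one_mul]
  have haform : ∀ k, a (k + 1) = a 0 + ∑ i, δ i k := by
    intro k
    induction k with
    | zero =>
      simp only [hadef, hdyn 0, hcolsum, Pi.add_apply]
      rw [Finset.sum_add_distrib]
      congr 1
      exact Finset.sum_congr rfl fun i _ => hθ0 i
    | succ k ih =>
      simp only [hadef] at ih ⊢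
      rw [hdyn (k + 1), hcolsum]
      simp only [Pi.add_apply]
      rw [Finset.sum_add_distrib, ih]
      have : ∑ i, θ (k + 1) i = ∑ i, (δ i (k + 1) - δ i k) := by
        refine Finset.sum_congr rfl fun i _ => ?_
        rw [hθk (k + 1) (by omega) i]
        norm_num
      rw [this, Finset.sum_sub_distrib]
      ring
  have hatend : Tendsto a atTop (nhds (a 0)) := by
    have hB : Tendsto (fun k : ℕ => (n : ℝ) * (α / 2) * ρ ^ (k + 1)) atTop (nhds 0) := by
      have := ((tendsto_pow_atTop_nhds_zero_of_lt_one hρ0 hρ1).comp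
        (tendsto_add_atTop_nat 1)).const_mul ((n : ℝ) * (α / 2))
      simpa using this
    have hshift : Tendsto (fun k => a (k + 1) - a 0) atTop (nhds 0) := by
      refine squeeze_zero_norm (fun k => ?_) hB
      rw [Real.norm_eq_abs, haform k, add_sub_cancel_left]
      calc |∑ i, δ i k| ≤ ∑ i, |δ i k| := Finset.abs_sum_le_sum_abs _ _
        _ ≤ ∑ _i : Fin n, α / 2 * ρ ^ (k + 1) := sum_le_sum fun i _ => hδ i k
        _ = (n : ℝ) * (α / 2) * ρ ^ (k + 1) := by
            rw [Finset.sum_const, card_univ, Fintype.card_fin, nsmul_eq_mul]; ring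
    have := hshift.add_const (a 0)
    simp only [sub_add_cancel, zero_add] at this
    exact (tendsto_add_atTop_iff_nat 1).1 this
  -- assemble
  intro i
  have hbound : ∀ k, |x k i - a k / n| ≤ s k := by
    intro k
    have h1 : x k i ≤ univ.sup' hne (x k) := le_sup' (x k) (mem_univ i)
    have h2 : univ.inf' hne (x k) ≤ x k i := inf'_le (x k) (mem_univ i)
    have h3 : a k ≤ (n : ℝ) * univ.sup' hne (x k) := by
      simp only [hadef]
      calc ∑ j, x k j ≤ ∑ _j : Fin n, univ.sup' hne (x k) :=
            sum_le_sum fun j _ => le_sup' (x k) (mem_univ j)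
        _ = (n : ℝ) * univ.sup' hne (x k) := by
            rw [Finset.sum_const, card_univ, Fintype.card_fin, nsmul_eq_mul]
    have h4 : (n : ℝ) * univ.inf' hne (x k) ≤ a k := by
      simp only [hadef]
      calc (n : ℝ) * univ.inf' hne (x k) = ∑ _j : Fin n, univ.inf' hne (x k) := by
            rw [Finset.sum_const, card_univ, Fintype.card_fin, nsmul_eq_mul]
        _ ≤ ∑ j, x k j := sum_le_sum fun j _ => inf'_le (x k) (mem_univ j)
    have h5 : a k / n ≤ univ.sup' hne (x k) := by
      rw [div_le_iff₀ hn0]; linarith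
    have h6 : univ.inf' hne (x k) ≤ a k / n := by
      rw [le_div_iff₀ hn0]; linarith
    simp only [hsdef]
    rw [abs_le]
    constructor <;> [linarith; linarith]
  have hdiff : Tendsto (fun k => x k i - a k / n) atTop (nhds 0) := by
    refine squeeze_zero_norm (fun k => ?_) hstend
    rw [Real.norm_eq_abs]
    exact hbound k
  have havg : Tendsto (fun k => a k / n) atTop (nhds (a 0 / n)) := hatend.div_const n
  have := hdiff.add havg
  simp only [sub_add_cancel, zero_add] at this
  exact this
end
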